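/- arXiv:1201.3296 — 5 statements merged into one kernel-verified Lean document; each statement's English description precedes it below -/
import Mathlib

section
/- Let B be a set of points of PG(n, Q), Q = p^h with p prime and p > 2, such that every subspace intersects B in 1 mod p or 0 points, and B meets every (n-k)-subspace. Suppose a line L satisfies 1 < |B ∩ L| < Q + 1 and |B| ≤ Q^k + Q^{k-1} + Q^{k-2}·(1+3/Q) (small). Then for every i with 1 ≤ i ≤ n−k there exists an i-dimensional subspace π_i containing L with B ∩ π_i = B ∩ L. -/
open Module Submodule

theorem aux_finrank_comap_mkQ {K V : Type*} [Field K] [AddCommGroup V] [Module K V]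
    [FiniteDimensional K V] (π : Submodule K V) (q : Submodule K (V ⧸ π)) :
    finrank K (q.comap π.mkQ) = finrank K π + finrank K q := by
  set W := q.comap π.mkQ with hW
  have hle : π ≤ W := by
    intro x hx
    have : π.mkQ x = 0 := by simpa [Submodule.Quotient.mk_eq_zero] using hx
    simp [hW, Submodule.mem_comap, this]
  have hmap : W.map π.mkQ = q := Submodule.map_comap_eq_of_surjective π.mkQ_surjective q
  have e := Submodule.quotientQuotientEquivQuotient π W hle
  rw [hmap] at e
  have h1 : finrank K ((V ⧸ π) ⧸ q) = finrank K (V ⧸ W) := e.finrank_eq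
  have h2 : finrank K ((V ⧸ π) ⧸ q) + finrank K q = finrank K (V ⧸ π) :=
    Submodule.finrank_quotient_add_finrank q
  have h3 : finrank K (V ⧸ π) + finrank K π = finrank K V :=
    Submodule.finrank_quotient_add_finrank π
  have h4 : finrank K (V ⧸ W) + finrank K W = finrank K V :=
    Submodule.finrank_quotient_add_finrank W
  omega

set_option maxHeartbeats 2000000 in
/-- If B ⊆ PG(n, Q), Q = p^h, p > 2 prime, meets every subspace in 0 or 1 mod p points,
blocks every (n-k)-space, is small, and L is a line with 1 < |B ∩ L| < Q + 1, then for
every 1 ≤ i ≤ n - k there is an i-space π_i ⊇ L with B ∩ π_i = B ∩ L.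
(The size bound is stated multiplied through by Q^2.) -/
theorem stmt_9 (p h Q : ℕ) (hp : p.Prime) (hp2 : 2 < p) (hQ : Q = p ^ h)
    (K : Type*) [Field K] [Fintype K] (hK : Fintype.card K = Q)
    (n k : ℕ) (hk : 1 ≤ k) (hkn : k ≤ n)
    (B : Set (Submodule K (Fin (n + 1) → K)))
    (hB : ∀ P ∈ B, Module.finrank K P = 1)
    (hmodp : ∀ W : Submodule K (Fin (n + 1) → K),
      Nat.card {P : Submodule K (Fin (n + 1) → K) // P ∈ B ∧ P ≤ W} = 0 ∨
      Nat.card {P : Submodule K (Fin (n + 1) → K) // P ∈ B ∧ P ≤ W} ≡ 1 [MOD p])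
    (hblock : ∀ W : Submodule K (Fin (n + 1) → K), Module.finrank K W = n - k + 1 →
      ∃ P ∈ B, P ≤ W)
    (hsize : Nat.card ↥B * Q ^ 2 ≤ Q ^ (k + 2) + Q ^ (k + 1) + Q ^ k + 3 * Q ^ (k - 1))
    (L : Submodule K (Fin (n + 1) → K)) (hL : Module.finrank K L = 2)
    (hL1 : 1 < Nat.card {P : Submodule K (Fin (n + 1) → K) // P ∈ B ∧ P ≤ L})
    (hL2 : Nat.card {P : Submodule K (Fin (n + 1) → K) // P ∈ B ∧ P ≤ L} < Q + 1) :
    ∀ i : ℕ, 1 ≤ i → i ≤ n - k →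
      ∃ π : Submodule K (Fin (n + 1) → K), Module.finrank K π = i + 1 ∧ L ≤ π ∧
        ∀ P ∈ B, P ≤ π → P ≤ L := by
  classical
  haveI : Finite (Submodule K (Fin (n + 1) → K)) :=
    Finite.of_injective _ SetLike.coe_injective
  haveI : Fintype (Submodule K (Fin (n + 1) → K)) := Fintype.ofFinite _
  have hp3 : 3 ≤ p := hp2
  have hh : h ≠ 0 := by
    rintro rfl
    have : 2 ≤ Q := by rw [← hK]; exact Fintype.one_lt_card
    rw [hQ, pow_zero] at this; omega
  have hQ3 : 3 ≤ Q := by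
    calc 3 ≤ p := hp3
    _ ≤ p ^ h := Nat.le_self_pow hh p
    _ = Q := hQ.symm
  set m := Nat.card {P : Submodule K (Fin (n + 1) → K) // P ∈ B ∧ P ≤ L} with hm
  have hm1 : m ≡ 1 [MOD p] := (hmodp L).resolve_left (by omega)
  set F : (Submodule K (Fin (n + 1) → K) → Prop) → Finset (Submodule K (Fin (n + 1) → K)) :=
    fun pr => Finset.univ.filter pr with hF
  have hmemF : ∀ (pr : Submodule K (Fin (n + 1) → K) → Prop) P, P ∈ F pr ↔ pr P := by
    intro pr P
    rw [hF]
    simp only [Finset.mem_filter, Finset.mem_univ, true_and]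
  have hcard : ∀ pr : Submodule K (Fin (n + 1) → K) → Prop,
      Nat.card {P : Submodule K (Fin (n + 1) → K) // pr P} = (F pr).card := by
    intro pr
    rw [Nat.card_eq_fintype_card, hF]
    exact Fintype.card_subtype pr
  intro i hi1
  induction i, hi1 using Nat.le_induction with
  | base => exact fun _ => ⟨L, hL, le_rfl, fun P _ hP => hP⟩
  | succ i hi ih =>
    intro hik
    obtain ⟨π, hπr, hLπ, hπB⟩ := ih (by omega)
    by_contra hcon
    push_neg at hcon
    -- quotient space setup
    have hVr : finrank K (Fin (n + 1) → K) = n + 1 := finrank_fin_fun K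
    have hq3 : finrank K ((Fin (n + 1) → K) ⧸ π) + finrank K π
        = finrank K (Fin (n + 1) → K) :=
      Submodule.finrank_quotient_add_finrank π
    have hdim : k + 1 ≤ finrank K ((Fin (n + 1) → K) ⧸ π) := by omega
    set b := Module.finBasis K ((Fin (n + 1) → K) ⧸ π) with hb
    set f : Fin (k + 1) → (Fin (n + 1) → K) ⧸ π := fun j => b ⟨j.1, by omega⟩ with hf
    have li : LinearIndependent K f := by
      apply b.linearIndependent.comp
      intro x y hxy
      exact Fin.ext (by simpa using congrArg Fin.val hxy)
    set w : (Fin k → K) → (Fin (n + 1) → K) ⧸ π :=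
      fun a => f 0 + ∑ j : Fin k, a j • f j.succ with hw
    have hcoefs : ∀ (c : K) (a : Fin k → K),
        c • f 0 + ∑ j : Fin k, a j • f j.succ = 0 → c = 0 ∧ a = 0 := by
      intro c a hz
      have hz' : ∑ r : Fin (k + 1), (Fin.cons c a : Fin (k + 1) → K) r • f r = 0 := by
        rw [Fin.sum_univ_succ]
        simpa using hz
      have hall := Fintype.linearIndependent_iff.mp li _ hz'
      constructor
      · simpa using hall 0
      · funext j; simpa using hall j.succ
    have hwne : ∀ a, w a ≠ 0 := by
      intro a ha
      have := (hcoefs 1 a (by simpa [hw] using ha)).1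
      simp at this
    have key : ∀ (a b' : Fin k → K) (c : K), w a = c • w b' → a = b' := by
      intro a b' c hab
      have hz : (1 - c) • f 0 + ∑ j : Fin k, (a j - c * b' j) • f j.succ = 0 := by
        have : (1 - c) • f 0 + ∑ j : Fin k, (a j - c * b' j) • f j.succ
            = w a - c • w b' := by
          rw [show (fun j : Fin k => (a j - c * b' j) • f j.succ)
              = fun j : Fin k => a j • f j.succ - c • (b' j • f j.succ) by
            funext j; rw [sub_smul, smul_smul]]
          rw [Finset.sum_sub_distrib, ← Finset.smul_sum]
          simp only [hw, smul_add]
          module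
        rw [this, hab, sub_self]
      obtain ⟨hc, ha⟩ := hcoefs _ _ hz
      have hc1 : c = 1 := (sub_eq_zero.mp hc).symm
      funext j
      have hj : a j - c * b' j = 0 := congrFun ha j
      rw [hc1, one_mul] at hj
      exact sub_eq_zero.mp hj
    -- the pencil of (i+2)-spaces through π
    set W : (Fin k → K) → Submodule K (Fin (n + 1) → K) :=
      fun a => (Submodule.span K {w a}).comap π.mkQ with hWdef
    have hπW : ∀ a, π ≤ W a := by
      intro a x hx
      have h0 : π.mkQ x = 0 := by simpa [Submodule.Quotient.mk_eq_zero] using hx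
      simp [hWdef, Submodule.mem_comap, h0]
    have hWr : ∀ a, finrank K (W a) = i + 1 + 1 := by
      intro a
      rw [hWdef]
      rw [aux_finrank_comap_mkQ, hπr, finrank_span_singleton (hwne a)]
    have hsep : ∀ (a b' : Fin k → K) (P : Submodule K (Fin (n + 1) → K)),
        P ≤ W a → P ≤ W b' → ¬ P ≤ π → a = b' := by
      intro a b' P hPa hPb hPπ
      obtain ⟨x, hxP, hxπ⟩ := SetLike.not_le_iff_exists.mp hPπ
      have hx0 : π.mkQ x ≠ 0 := by
        intro h0
        exact hxπ (by simpa [Submodule.Quotient.mk_eq_zero] using h0)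
      have hxa : π.mkQ x ∈ Submodule.span K {w a} := Submodule.mem_comap.mp (hPa hxP)
      have hxb : π.mkQ x ∈ Submodule.span K {w b'} := Submodule.mem_comap.mp (hPb hxP)
      obtain ⟨c, hc⟩ := Submodule.mem_span_singleton.mp hxa
      obtain ⟨d, hd⟩ := Submodule.mem_span_singleton.mp hxb
      have hcne : c ≠ 0 := by rintro rfl; rw [zero_smul] at hc; exact hx0 hc.symm
      have hwab : w a = (c⁻¹ * d) • w b' := by
        rw [mul_smul, hd, ← hc, ← mul_smul, inv_mul_cancel₀ hcne, one_smul]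
      exact key _ _ _ hwab
    have hbad : ∀ a : Fin k → K, ∃ P, P ∈ B ∧ P ≤ W a ∧ ¬ P ≤ π := by
      intro a
      obtain ⟨P, hPB, hPW, hPL⟩ := hcon (W a) (hWr a) (hLπ.trans (hπW a))
      exact ⟨P, hPB, hPW, fun hh' => hPL (hπB P hPB hh')⟩
    -- counting
    set T : (Fin k → K) → Finset (Submodule K (Fin (n + 1) → K)) :=
      fun a => F (fun P => P ∈ B ∧ P ≤ W a ∧ ¬ P ≤ π) with hT
    have hTcard : ∀ a, p ≤ (T a).card := by
      intro a
      have e1 : (F (fun P => P ∈ B ∧ P ≤ W a)).card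
          = (F (fun P => P ∈ B ∧ P ≤ L)).card + (T a).card := by
        rw [← Finset.card_filter_add_card_filter_not
          (s := F (fun P => P ∈ B ∧ P ≤ W a))
          (p := fun P : Submodule K (Fin (n + 1) → K) => P ≤ π)]
        congr 2
        · ext P
          simp only [Finset.mem_filter, hmemF]
          constructor
          · rintro ⟨⟨h1, _⟩, h3⟩; exact ⟨h1, hπB P h1 h3⟩
          · rintro ⟨h1, h2⟩
            exact ⟨⟨h1, (h2.trans hLπ).trans (hπW a)⟩, h2.trans hLπ⟩
        · ext P
          simp only [hT, Finset.mem_filter, hmemF]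
          tauto
      have hsplit : Nat.card {P : Submodule K (Fin (n + 1) → K) // P ∈ B ∧ P ≤ W a}
          = m + (T a).card := by
        rw [hcard, e1, hm, hcard]
      have hmod : m + (T a).card ≡ 1 [MOD p] := by
        have := (hmodp (W a)).resolve_left (by rw [hsplit]; omega)
        rwa [hsplit] at this
      have hmm : m ≡ m + (T a).card [MOD p] := hm1.trans hmod.symm
      have hdvd : p ∣ (T a).card := by
        have := (Nat.modEq_iff_dvd' (Nat.le_add_right m _)).mp hmm
        simpa using this
      have hne : 0 < (T a).card := by
        obtain ⟨P, hPB, hPW, hPπ⟩ := hbad a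
        refine Finset.card_pos.mpr ⟨P, ?_⟩
        rw [hT, hmemF]
        exact ⟨hPB, hPW, hPπ⟩
      exact Nat.le_of_dvd hne hdvd
    have hdisj : ∀ a ∈ (Finset.univ : Finset (Fin k → K)), ∀ b' ∈ Finset.univ,
        a ≠ b' → Disjoint (T a) (T b') := by
      intro a _ b' _ hab
      rw [Finset.disjoint_left]
      intro P hPa hPb
      rw [hT, hmemF] at hPa hPb
      exact hab (hsep a b' P hPa.2.1 hPb.2.1 hPa.2.2)
    have hbig : Fintype.card (Fin k → K) * p ≤ (Finset.univ.biUnion T).card := by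
      rw [Finset.card_biUnion hdisj]
      calc Fintype.card (Fin k → K) * p = ∑ _a : Fin k → K, p := by
            rw [Finset.sum_const, Finset.card_univ, smul_eq_mul]
      _ ≤ ∑ a : Fin k → K, (T a).card := Finset.sum_le_sum (fun a _ => hTcard a)
    have hdisj2 : Disjoint (Finset.univ.biUnion T)
        (F (fun P => P ∈ B ∧ P ≤ L)) := by
      rw [Finset.disjoint_left]
      intro P hPa hPb
      rw [Finset.mem_biUnion] at hPa
      rw [hmemF] at hPb
      obtain ⟨a, _, hPa⟩ := hPa
      rw [hT, hmemF] at hPa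
      exact hPa.2.2 (hPb.2.trans hLπ)
    have hsub : (Finset.univ.biUnion T) ∪ (F (fun P => P ∈ B ∧ P ≤ L))
        ⊆ F (fun P => P ∈ B) := by
      intro P hP
      rw [Finset.mem_union, Finset.mem_biUnion] at hP
      rw [hmemF]
      rcases hP with ⟨a, _, hPa⟩ | hPb
      · rw [hT, hmemF] at hPa; exact hPa.1
      · rw [hmemF] at hPb; exact hPb.1
    have hBeq : Nat.card ↥B = (F (fun P => P ∈ B)).card :=
      hcard (fun P : Submodule K (Fin (n + 1) → K) => P ∈ B)
    have final : Fintype.card (Fin k → K) * p + m ≤ Nat.card ↥B := by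
      rw [hBeq]
      calc Fintype.card (Fin k → K) * p + m
          ≤ (Finset.univ.biUnion T).card + (F (fun P => P ∈ B ∧ P ≤ L)).card := by
            rw [hm, hcard]; exact Nat.add_le_add_right hbig _
      _ = ((Finset.univ.biUnion T) ∪ (F (fun P => P ∈ B ∧ P ≤ L))).card :=
            (Finset.card_union_of_disjoint hdisj2).symm
      _ ≤ _ := Finset.card_le_card hsub
    -- arithmetic contradiction
    have hQk : Fintype.card (Fin k → K) = Q ^ k := by
      rw [Fintype.card_fun, hK, Fintype.card_fin]
    have hNB : 3 * Q ^ k + 2 ≤ Nat.card ↥B := by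
      rw [hQk] at final
      have h3Q : Q ^ k * 3 ≤ Q ^ k * p := Nat.mul_le_mul_left _ hp3
      linarith [final, h3Q, hL1]
    have lhs : 3 * Q ^ (k + 2) + 2 * Q ^ 2 ≤ Nat.card ↥B * Q ^ 2 := by
      calc 3 * Q ^ (k + 2) + 2 * Q ^ 2 = (3 * Q ^ k + 2) * Q ^ 2 := by
            rw [pow_add]; ring
      _ ≤ Nat.card ↥B * Q ^ 2 := Nat.mul_le_mul_right _ hNB
    have hD : 3 * Q ^ (k - 1) ≤ Q ^ k := by
      calc 3 * Q ^ (k - 1) ≤ Q * Q ^ (k - 1) := Nat.mul_le_mul_right _ hQ3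
      _ = Q ^ k := by rw [← pow_succ']; congr 1; omega
    have hC : 2 * Q ^ k ≤ Q ^ (k + 1) := by
      calc 2 * Q ^ k ≤ Q * Q ^ k := Nat.mul_le_mul_right _ (by omega)
      _ = Q ^ (k + 1) := (pow_succ' Q k).symm
    have hA : Q ^ (k + 1) ≤ Q ^ (k + 2) :=
      Nat.pow_le_pow_right (by omega) (by omega)
    have hq2 : 1 ≤ Q ^ 2 := Nat.one_le_pow _ _ (by omega)
    linarith [hsize, lhs, hD, hC, hA, hq2]
end

section
/- In PG(1, q^3), the nonempty F_q-linear sets that are not a single point and not all of PG(1, q^3) are exactly of three types, with sizes q+1 (a subline PG(1,q)), q^2+1, or q^2+q+1 (a scattered F_q-linear set). -/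
open Module Submodule

open scoped Classical
section Helpers

variable {F K : Type*} [Field F] [Fintype F] [Field K] [Fintype K] [Algebra F K]

/-- A rank-one `K`-subspace containing a nonzero vector equals the span of that vector. -/
lemma aux_point_eq_span {P : Submodule K (Fin 2 → K)} (hP : Module.finrank K P = 1)
    {v : Fin 2 → K} (hv : v ≠ 0) (hvP : v ∈ P) : P = Submodule.span K {v} := by
  refine (Submodule.eq_of_le_of_finrank_eq
    ((Submodule.span_singleton_le_iff_mem v P).2 hvP) ?_).symm
  rw [finrank_span_singleton hv, hP]

/-- If `U` is contained (as a set) in a single rank-one `K`-subspace `P₀`, then the linear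
set defined by `U` is the single point `P₀`. -/
lemma aux_single_point (U : Submodule F (Fin 2 → K)) (hUne : U ≠ ⊥)
    (P₀ : Submodule K (Fin 2 → K)) (hP₀ : Module.finrank K P₀ = 1)
    (hsub : U ≤ P₀.restrictScalars F) :
    Nat.card {P : Submodule K (Fin 2 → K) //
        Module.finrank K P = 1 ∧ P.restrictScalars F ⊓ U ≠ ⊥} = 1 := by
  have hmem : Module.finrank K P₀ = 1 ∧ P₀.restrictScalars F ⊓ U ≠ ⊥ := by
    refine ⟨hP₀, ?_⟩
    rwa [inf_eq_right.2 hsub]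
  have key : ∀ (Q : Submodule K (Fin 2 → K)),
      Module.finrank K Q = 1 → Q.restrictScalars F ⊓ U ≠ ⊥ → Q = P₀ := by
    intro Q hQ1 hQ2
    obtain ⟨w, hw, hw0⟩ := (Submodule.ne_bot_iff _).1 hQ2
    obtain ⟨hwQ, hwU⟩ := Submodule.mem_inf.1 hw
    have hwQ' : w ∈ Q := hwQ
    have hwP : w ∈ P₀ := hsub hwU
    rw [aux_point_eq_span hQ1 hw0 hwQ', aux_point_eq_span hP₀ hw0 hwP]
  rw [Nat.card_eq_one_iff_unique]
  constructor
  · constructor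
    intro a b
    apply Subtype.ext
    rw [key a.1 a.2.1 a.2.2, key b.1 b.2.1 b.2.2]
  · exact ⟨⟨P₀, hmem⟩⟩

/-- Cardinality of a finite submodule. -/
lemma aux_card_submodule {q : ℕ} (hF : Fintype.card F = q) (W : Submodule F (Fin 2 → K)) :
    Nat.card W = q ^ Module.finrank F W := by
  classical
  rw [Nat.card_eq_fintype_card, card_eq_pow_finrank (K := F) (V := W), hF]

/-- The number of nonzero vectors in a finite submodule. -/
lemma aux_card_filter {q : ℕ} (hF : Fintype.card F = q) (W : Submodule F (Fin 2 → K)) :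
    (Finset.univ.filter (fun v : Fin 2 → K => v ∈ W ∧ v ≠ 0)).card
      = q ^ Module.finrank F W - 1 := by
  classical
  have h2 : (Finset.univ.filter (fun v : Fin 2 → K => v ∈ W ∧ v ≠ 0))
      = (Finset.univ.filter (fun v : Fin 2 → K => v ∈ W)).erase 0 := by
    ext v
    simp only [Finset.mem_filter, Finset.mem_erase, Finset.mem_univ, true_and]
    tauto
  have h1 : (Finset.univ.filter (fun v : Fin 2 → K => v ∈ W)).card
      = q ^ Module.finrank F W := by
    rw [← aux_card_submodule hF W, Nat.card_eq_fintype_card, Fintype.card_subtype]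
  rw [h2, Finset.card_erase_of_mem (by simp [W.zero_mem]), h1]

end Helpers

/-- A nonempty F_q-linear set in PG(1, q^3) that is not a single point and not the whole
line has size q + 1, q^2 + 1 or q^2 + q + 1. -/
theorem stmt_10 (q : ℕ) (F K : Type*) [Field F] [Fintype F] [Field K] [Fintype K]
    [Algebra F K] (hF : Fintype.card F = q) (hK : Fintype.card K = q ^ 3)
    (U : Submodule F (Fin 2 → K)) (hUne : U ≠ ⊥)
    (hnotpt : Nat.card {P : Submodule K (Fin 2 → K) //
        Module.finrank K P = 1 ∧ P.restrictScalars F ⊓ U ≠ ⊥} ≠ 1)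
    (hnotall : ∃ P : Submodule K (Fin 2 → K),
        Module.finrank K P = 1 ∧ P.restrictScalars F ⊓ U = ⊥) :
    Nat.card {P : Submodule K (Fin 2 → K) //
        Module.finrank K P = 1 ∧ P.restrictScalars F ⊓ U ≠ ⊥}
      ∈ ({q + 1, q ^ 2 + 1, q ^ 2 + q + 1} : Set ℕ) := by
  classical
  have hq2 : 2 ≤ q := hF ▸ Fintype.one_lt_card
  -- basic rank computations
  have hFK : Module.finrank F K = 3 := by
    have h := card_eq_pow_finrank (K := F) (V := K)
    rw [hF, hK] at h
    exact (Nat.pow_right_injective hq2 h.symm)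
  have hM6 : Module.finrank F (Fin 2 → K) = 6 := by
    rw [finrank_pi_fintype]
    simp [hFK]
  -- ranks of points over F
  have hP3 : ∀ P : Submodule K (Fin 2 → K), Module.finrank K P = 1 →
      Module.finrank F (P.restrictScalars F) = 3 := by
    intro P hP
    have e : (P.restrictScalars F) ≃ₗ[F] P :=
      (Submodule.restrictScalarsEquiv F K (Fin 2 → K) P).restrictScalars F
    rw [e.finrank_eq, ← Module.finrank_mul_finrank F K P, hFK, hP]
  -- the fintype on submodules
  letI : Finite (Submodule K (Fin 2 → K)) :=
    Finite.of_injective (fun P => (P : Set (Fin 2 → K))) SetLike.coe_injective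
  letI : Fintype (Submodule K (Fin 2 → K)) := Fintype.ofFinite _
  set T : Finset (Submodule K (Fin 2 → K)) :=
    Finset.univ.filter
      (fun P => Module.finrank K P = 1 ∧ P.restrictScalars F ⊓ U ≠ ⊥) with hT
  have hTmem : ∀ P : Submodule K (Fin 2 → K),
      P ∈ T ↔ Module.finrank K P = 1 ∧ P.restrictScalars F ⊓ U ≠ ⊥ := by
    intro P; simp [hT]
  have hcardT : Nat.card {P : Submodule K (Fin 2 → K) //
      Module.finrank K P = 1 ∧ P.restrictScalars F ⊓ U ≠ ⊥} = T.card := by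
    rw [Nat.card_eq_fintype_card, Fintype.card_subtype, hT]
  -- the master counting identity
  have master : ∑ P ∈ T, (q ^ Module.finrank F ↥(P.restrictScalars F ⊓ U) - 1)
      = q ^ Module.finrank F U - 1 := by
    have H : ∀ v ∈ Finset.univ.filter (fun v : Fin 2 → K => v ∈ U ∧ v ≠ 0),
        Submodule.span K {v} ∈ T := by
      intro v hv
      simp only [Finset.mem_filter, Finset.mem_univ, true_and] at hv
      obtain ⟨hvU, hv0⟩ := hv
      rw [hTmem]
      refine ⟨finrank_span_singleton hv0, ?_⟩
      rw [Submodule.ne_bot_iff]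
      exact ⟨v, Submodule.mem_inf.2 ⟨Submodule.mem_span_singleton_self v, hvU⟩, hv0⟩
    have hfib := Finset.card_eq_sum_card_fiberwise H
    rw [← aux_card_filter hF U, hfib]
    refine Finset.sum_congr rfl (fun P hP => ?_)
    obtain ⟨hP1, _⟩ := (hTmem P).1 hP
    rw [← aux_card_filter hF (P.restrictScalars F ⊓ U)]
    congr 1
    ext v
    simp only [Finset.mem_filter, Finset.mem_univ, true_and, Submodule.mem_inf,
      Submodule.restrictScalars_mem]
    constructor
    · rintro ⟨⟨hvP, hvU⟩, hv0⟩
      exact ⟨⟨hvU, hv0⟩, (aux_point_eq_span hP1 hv0 hvP).symm⟩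
    · rintro ⟨⟨hvU, hv0⟩, hsp⟩
      refine ⟨⟨?_, hvU⟩, hv0⟩
      rw [← hsp]
      exact Submodule.mem_span_singleton_self v
  -- rank of U is between 1 and 3
  have hn1 : 1 ≤ Module.finrank F U := by
    rcases Nat.eq_zero_or_pos (Module.finrank F U) with h | h
    · exact absurd (Submodule.finrank_eq_zero.1 h) hUne
    · exact h
  have hn3 : Module.finrank F U ≤ 3 := by
    obtain ⟨P, hP1, hPU⟩ := hnotall
    have h3 := Submodule.finrank_sup_add_finrank_inf_eq (P.restrictScalars F) U
    rw [hPU, finrank_bot, hP3 P hP1] at h3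
    have h4 : Module.finrank F ↥(P.restrictScalars F ⊔ U)
        ≤ 6 := hM6 ▸ Submodule.finrank_le _
    omega
  -- facts about the local ranks
  have hd_low : ∀ P ∈ T, 1 ≤ Module.finrank F ↥(P.restrictScalars F ⊓ U) := by
    intro P hP
    obtain ⟨_, hP2⟩ := (hTmem P).1 hP
    rcases Nat.eq_zero_or_pos (Module.finrank F ↥(P.restrictScalars F ⊓ U)) with h | h
    · exact absurd (Submodule.finrank_eq_zero.1 h) hP2
    · exact h
  have hd_notmax : ∀ P ∈ T,
      Module.finrank F ↥(P.restrictScalars F ⊓ U) ≠ Module.finrank F U := by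
    intro P hP hcontra
    obtain ⟨hP1, _⟩ := (hTmem P).1 hP
    have heq : P.restrictScalars F ⊓ U = U :=
      Submodule.eq_of_le_of_finrank_eq inf_le_right hcontra
    have hsub : U ≤ P.restrictScalars F := by
      rw [← heq]; exact inf_le_left
    exact hnotpt (aux_single_point U hUne P hP1 hsub)
  have hd_le : ∀ P ∈ T, Module.finrank F ↥(P.restrictScalars F ⊓ U)
      ≤ Module.finrank F U := fun P _ => Submodule.finrank_mono inf_le_right
  -- the key uniqueness: at most one point with local rank 2 when rank U = 3
  have huniq : ∀ P ∈ T, ∀ Q ∈ T,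
      Module.finrank F ↥(P.restrictScalars F ⊓ U) = 2 →
      Module.finrank F ↥(Q.restrictScalars F ⊓ U) = 2 →
      Module.finrank F U = 3 → P = Q := by
    intro P hP Q hQ hdP hdQ hU3
    by_contra hne
    obtain ⟨hP1, _⟩ := (hTmem P).1 hP
    obtain ⟨hQ1, _⟩ := (hTmem Q).1 hQ
    set WP := P.restrictScalars F ⊓ U with hWP
    set WQ := Q.restrictScalars F ⊓ U with hWQ
    have hsup : Module.finrank F ↥(WP ⊔ WQ) ≤ 3 := by
      rw [← hU3]
      exact Submodule.finrank_mono (sup_le inf_le_right inf_le_right)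
    have hsum := Submodule.finrank_sup_add_finrank_inf_eq WP WQ
    rw [hdP, hdQ] at hsum
    have hpos : 1 ≤ Module.finrank F ↥(WP ⊓ WQ) := by omega
    have hne_bot : WP ⊓ WQ ≠ ⊥ := by
      intro h
      rw [h, finrank_bot] at hpos
      omega
    obtain ⟨w, hw, hw0⟩ := (Submodule.ne_bot_iff _).1 hne_bot
    obtain ⟨hwP, hwQ⟩ := Submodule.mem_inf.1 hw
    have hwP' : w ∈ P := (Submodule.mem_inf.1 hwP).1
    have hwQ' : w ∈ Q := (Submodule.mem_inf.1 hwQ).1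
    exact hne ((aux_point_eq_span hP1 hw0 hwP').trans (aux_point_eq_span hQ1 hw0 hwQ').symm)
  -- now case on the rank of U
  rw [hcardT]
  have hcase : Module.finrank F U = 1 ∨ Module.finrank F U = 2 ∨
      Module.finrank F U = 3 := by omega
  rcases hcase with hn | hn | hn
  · -- rank 1 : single point, contradiction
    exfalso
    obtain ⟨u, hu, hu0⟩ := (Submodule.ne_bot_iff _).1 hUne
    have hUspan : Submodule.span F {u} = U := by
      refine Submodule.eq_of_le_of_finrank_eq
        ((Submodule.span_singleton_le_iff_mem u U).2 hu) ?_
      rw [finrank_span_singleton hu0, hn]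
    have hsub : U ≤ (Submodule.span K {u}).restrictScalars F := by
      rw [← hUspan]
      exact Submodule.span_le_restrictScalars F K {u}
    exact hnotpt (aux_single_point U hUne (Submodule.span K {u})
      (finrank_span_singleton hu0) hsub)
  · -- rank 2 : all local ranks are 1, so q + 1 points
    left
    have hall1 : ∀ P ∈ T, Module.finrank F ↥(P.restrictScalars F ⊓ U) = 1 := by
      intro P hP
      have h1 := hd_low P hP
      have h2 := hd_le P hP
      have h3 := hd_notmax P hP
      rw [hn] at h2 h3
      omega
    have hsum : ∑ P ∈ T, (q ^ Module.finrank F ↥(P.restrictScalars F ⊓ U) - 1)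
        = T.card * (q - 1) := by
      rw [Finset.sum_congr rfl (fun P hP => by rw [hall1 P hP, pow_one]),
        Finset.sum_const, smul_eq_mul]
    rw [hsum, hn] at master
    -- master : T.card * (q - 1) = q ^ 2 - 1
    obtain ⟨k, rfl⟩ : ∃ k, q = k + 1 := ⟨q - 1, by omega⟩
    have hk1 : 1 ≤ k := by omega
    have hq1 : k + 1 - 1 = k := by omega
    have e2 : (k + 1) ^ 2 = ((k + 1) + 1) * k + 1 := by ring
    rw [hq1, e2, Nat.add_sub_cancel] at master
    have := Nat.eq_of_mul_eq_mul_right hk1 master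
    omega
  · -- rank 3
    have hd12 : ∀ P ∈ T, Module.finrank F ↥(P.restrictScalars F ⊓ U) = 1 ∨
        Module.finrank F ↥(P.restrictScalars F ⊓ U) = 2 := by
      intro P hP
      have h1 := hd_low P hP
      have h2 := hd_le P hP
      have h3 := hd_notmax P hP
      rw [hn] at h2 h3
      omega
    obtain ⟨k, rfl⟩ : ∃ k, q = k + 1 := ⟨q - 1, by omega⟩
    have hk1 : 1 ≤ k := by omega
    have hq1 : k + 1 - 1 = k := by omega
    by_cases hex : ∃ P₀ ∈ T, Module.finrank F ↥(P₀.restrictScalars F ⊓ U) = 2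
    · -- one point of local rank 2 : q^2 + 1 points
      right; left
      obtain ⟨P₀, hP₀T, hP₀2⟩ := hex
      have hrest : ∀ P ∈ T.erase P₀,
          (k + 1) ^ Module.finrank F ↥(P.restrictScalars F ⊓ U) - 1 = (k + 1) - 1 := by
        intro P hP
        have hPT : P ∈ T := Finset.mem_of_mem_erase hP
        have hPne : P ≠ P₀ := Finset.ne_of_mem_erase hP
        rcases hd12 P hPT with h | h
        · rw [h, pow_one]
        · exact absurd (huniq P hPT P₀ hP₀T h hP₀2 hn) hPne
      have hsplit := Finset.add_sum_erase T
        (fun P => (k + 1) ^ Module.finrank F ↥(P.restrictScalars F ⊓ U) - 1) hP₀T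
      rw [← hsplit] at master
      beta_reduce at master
      rw [hP₀2, hn,
        Finset.sum_congr rfl hrest, Finset.sum_const, smul_eq_mul] at master
      -- master : (k+1)^2 - 1 + (T.erase P₀).card * (k+1-1) = (k+1)^3 - 1
      set m := (T.erase P₀).card with hm
      have hTc : T.card = m + 1 := by
        rw [hm, Finset.card_erase_of_mem hP₀T]
        have : 1 ≤ T.card := Finset.card_pos.2 ⟨P₀, hP₀T⟩
        omega
      have e2 : (k + 1) ^ 2 = (k + 2) * k + 1 := by ring
      have e3 : (k + 1) ^ 3 = (k + 2) * k + (k + 1) ^ 2 * k + 1 := by ring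
      rw [hq1, e2, e3, Nat.add_sub_cancel, Nat.add_sub_cancel] at master
      have hmk : m * k = (k + 1) ^ 2 * k := Nat.add_left_cancel master
      have hm2 := Nat.eq_of_mul_eq_mul_right hk1 hmk
      rw [hTc, hm2]
    · -- all local ranks 1 : q^2 + q + 1 points
      right; right
      push_neg at hex
      have hall1 : ∀ P ∈ T, Module.finrank F ↥(P.restrictScalars F ⊓ U) = 1 := by
        intro P hP
        rcases hd12 P hP with h | h
        · exact h
        · exact absurd h (hex P hP)
      have hsum : ∑ P ∈ T, ((k + 1) ^ Module.finrank F ↥(P.restrictScalars F ⊓ U) - 1)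
          = T.card * ((k + 1) - 1) := by
        rw [Finset.sum_congr rfl (fun P hP => by rw [hall1 P hP, pow_one]),
          Finset.sum_const, smul_eq_mul]
      rw [hsum, hn] at master
      have e3 : (k + 1) ^ 3 = ((k + 1) ^ 2 + (k + 1) + 1) * k + 1 := by ring
      rw [hq1, e3, Nat.add_sub_cancel] at master
      exact Nat.eq_of_mul_eq_mul_right hk1 master
end

section
/- A subline PG(1, q) of PG(1, q^3) intersects any F_q-linear set of PG(1, q^3) in 0, 1, 2, 3, or q+1 points. -/
/-!
Write the points of the subline as `⟨g (s, t)⟩` with `(s : t)` on the projective line over `F`.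
Such a point meets `U` exactly when the `F`-linear map `K → K² ⧸ U`, `λ ↦ [λ • g (s, t)]`, has a
nontrivial kernel, and these maps form a pencil `s T₁ + t T₂` of maps out of the 3-dimensional
`F`-space `K`. If every member of the pencil is singular, all `q + 1` points meet `U`. Otherwise
compose with a left inverse `ρ` of an injective member: `det (ρ ∘ (s T₁ + t T₂))` is a nonzero
binary cubic form over `F` vanishing at every point of the intersection, so there are at most
three of them.
-/

open Polynomial

/-- Homogeneous coordinates on the projective line `Option R = R ∪ {∞}`:
`none` is `(1 : 0)` and `some s` is `(s : 1)`. -/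
def projCoords {R : Type*} [Zero R] [One R] : Option R → Fin 2 → R
  | none => ![1, 0]
  | some s => ![s, 1]

section ProjCoords

variable {R : Type*} [Field R]

lemma projCoords_ne_zero (x : Option R) : projCoords x ≠ 0 := by
  cases x <;> simp [projCoords, funext_iff, Fin.forall_fin_two]

lemma projCoords_some (s : R) : projCoords (some s) = s • ![1, 0] + ![0, 1] := by
  ext i; fin_cases i <;> simp [projCoords]

lemma projCoords_map {S : Type*} [Field S] (f : R →+* S) (x : Option R) :
    (fun i => f (projCoords x i)) = projCoords (x.map f) := by
  cases x <;> ext i <;> fin_cases i <;> simp [projCoords]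

lemma exists_eq_smul_projCoords {v : Fin 2 → R} (hv : v ≠ 0) :
    ∃ c : R, c ≠ 0 ∧ ∃ x, v = c • projCoords x := by
  by_cases h1 : v 1 = 0
  · have h0 : v 0 ≠ 0 := fun h0 => hv (funext fun i => by fin_cases i <;> assumption)
    exact ⟨v 0, h0, none, funext fun i => by fin_cases i <;> simp [projCoords, h1]⟩
  · exact ⟨v 1, h1, some (v 0 / v 1),
      funext fun i => by fin_cases i <;> simp [projCoords, mul_div_cancel₀ _ h1]⟩

lemma span_projCoords_injective :
    Function.Injective fun x : Option R => Submodule.span R {projCoords x} := by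
  intro x y hxy
  have hy : projCoords y ∈ Submodule.span R {projCoords x} :=
    (congrArg (projCoords y ∈ ·) hxy).mpr (Submodule.mem_span_singleton_self _)
  obtain ⟨c, hc⟩ := Submodule.mem_span_singleton.mp hy
  have h0 := congrFun hc 0
  have h1 := congrFun hc 1
  cases x <;> cases y <;> simp_all [projCoords]

end ProjCoords

section Pencil

variable {F M N : Type*} [Field F] [AddCommGroup M] [Module F M] [AddCommGroup N] [Module F N]

/-- `x.elim (p.coeff n) p.eval` is the degree-`n` homogenization of `p` evaluated at the point `x`
of the projective line. -/
lemma card_homogenization_zeros_le {p : F[X]} (hp : p ≠ 0) {n : ℕ} (hn : p.natDegree ≤ n) :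
    Nat.card {x : Option F // x.elim (p.coeff n) p.eval = 0} ≤ n := by
  classical
  set roots := p.roots.toFinset.map Function.Embedding.some
  have hroots : roots.card ≤ p.natDegree :=
    (Finset.card_map _).trans_le (p.roots.toFinset_card_le.trans p.card_roots')
  have hsub : {x : Option F | x.elim (p.coeff n) p.eval = 0} ⊆ ↑(insert none roots) := by
    rintro (_ | s) hs
    · simp
    · simp_all [roots, Polynomial.mem_roots hp]
  by_cases hlead : p.coeff n = 0
  · have hlt : p.natDegree < n := lt_of_le_of_ne hn fun h => hp (by
      rw [← leadingCoeff_eq_zero, leadingCoeff, h, hlead])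
    calc _ ≤ Nat.card (↑(insert none roots) : Set (Option F)) :=
          Nat.card_mono (Finset.finite_toSet _) hsub
      _ ≤ roots.card + 1 := by
          rw [Nat.card_coe_set_eq, Set.ncard_coe_finset]; exact Finset.card_insert_le _ _
      _ ≤ n := by omega
  · have hsub' : {x : Option F | x.elim (p.coeff n) p.eval = 0} ⊆ ↑roots := by
      rintro (_ | s) hs
      · exact absurd hs hlead
      · simpa using hsub hs
    calc _ ≤ Nat.card (↑roots : Set (Option F)) := Nat.card_mono (Finset.finite_toSet _) hsub'
      _ ≤ n := by rw [Nat.card_coe_set_eq, Set.ncard_coe_finset]; omega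

lemma card_det_eq_zero_le [FiniteDimensional F M] (Ψ : (Fin 2 → F) →ₗ[F] Module.End F M)
    (h : ∃ x, LinearMap.det (Ψ (projCoords x)) ≠ 0) :
    Nat.card {x // LinearMap.det (Ψ (projCoords x)) = 0} ≤ Module.finrank F M := by
  set b := Module.finBasis F M
  set A := LinearMap.toMatrix b b (Ψ ![(1 : F), 0])
  set B := LinearMap.toMatrix b b (Ψ ![(0 : F), 1])
  set p : F[X] := ((X : F[X]) • A.map C + B.map C).det
  have hdet (x : Option F) :
      LinearMap.det (Ψ (projCoords x)) = x.elim (p.coeff (Module.finrank F M)) p.eval := by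
    cases x with
    | none =>
      rw [← Fintype.card_fin (Module.finrank F M), coeff_det_X_add_C_card,
        ← LinearMap.det_toMatrix b]
      rfl
    | some s =>
      rw [← LinearMap.det_toMatrix b, projCoords_some, map_add, map_smul, map_add, map_smul]
      simp only [Option.elim, p, eval, ← coe_eval₂RingHom, RingHom.map_det]
      congr 1
      ext i j
      simp only [Matrix.add_apply, Matrix.smul_apply, smul_eq_mul, RingHom.mapMatrix_apply,
        coe_eval₂RingHom, Matrix.map_apply, X_mul_C, eval₂_add, eval₂_mul, eval₂_C,
        RingHom.id_apply, eval₂_X, A, B]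
      ring
  have hp : p ≠ 0 := by
    obtain ⟨x, hx⟩ := h
    rintro hp
    cases x <;> simp_all
  simp_rw [hdet]
  exact card_homogenization_zeros_le hp
    ((natDegree_det_X_add_C_le A B).trans_eq (Fintype.card_fin _))

lemma ker_ne_bot_forall_or_card_le [Finite F] [FiniteDimensional F M]
    (Φ : (Fin 2 → F) →ₗ[F] M →ₗ[F] N) :
    (∀ x, LinearMap.ker (Φ (projCoords x)) ≠ ⊥) ∨
      Nat.card {x // LinearMap.ker (Φ (projCoords x)) ≠ ⊥} ≤ Module.finrank F M := by
  refine or_iff_not_imp_left.mpr fun hall => ?_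
  obtain ⟨x₀, hx₀⟩ : ∃ x₀, LinearMap.ker (Φ (projCoords x₀)) = ⊥ := by simpa using hall
  obtain ⟨ρ, hρ⟩ := (Φ (projCoords x₀)).exists_leftInverse_of_injective hx₀
  set Ψ := LinearMap.compRight F ρ ∘ₗ Φ
  have hΨ (x : Option F) : Ψ (projCoords x) = ρ ∘ₗ Φ (projCoords x) := rfl
  have hsingular (x : Option F) (hx : LinearMap.ker (Φ (projCoords x)) ≠ ⊥) :
      LinearMap.det (Ψ (projCoords x)) = 0 :=
    LinearMap.det_eq_zero_iff_ker_ne_bot.mpr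
      (ne_bot_of_le_ne_bot hx (LinearMap.ker_le_ker_comp _ _))
  calc _ ≤ Nat.card {x // LinearMap.det (Ψ (projCoords x)) = 0} :=
        Nat.card_le_card_of_injective _ (Subtype.impEmbedding _ _ hsingular).injective
    _ ≤ _ := card_det_eq_zero_le Ψ ⟨x₀, by simp [hΨ, hρ]⟩

end Pencil

section Subline

variable {F K V : Type*} [Field F] [Field K] [Algebra F K] [AddCommGroup V] [Module K V]

lemma card_subline_eq (g : (Fin 2 → K) →ₗ[K] V) (hg : Function.Injective g)
    (Q : Submodule K V → Prop) :
    Nat.card {P : Submodule K V // (∃ v : Fin 2 → F, v ≠ 0 ∧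
        P = Submodule.span K {g (fun i => algebraMap F K (v i))}) ∧ Q P} =
      Nat.card {x : Option F //
        Q (Submodule.span K {g (fun i => algebraMap F K (projCoords x i))})} := by
  set φ : Option F → Submodule K V :=
    fun x => Submodule.span K {g (fun i => algebraMap F K (projCoords x i))}
  have hφ : Function.Injective φ := by
    have : φ = Submodule.map g ∘ (fun y => Submodule.span K {projCoords y}) ∘
        Option.map (algebraMap F K) := by
      ext1 x
      simp [φ, Submodule.map_span, projCoords_map]
    rw [this]
    exact (Submodule.map_injective_of_injective hg).comp
      (span_projCoords_injective.comp (Option.map_injective (algebraMap F K).injective))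
  have hrange : {P | (∃ v : Fin 2 → F, v ≠ 0 ∧
      P = Submodule.span K {g (fun i => algebraMap F K (v i))}) ∧ Q P} = φ '' {x | Q (φ x)} := by
    ext P
    constructor
    · rintro ⟨⟨v, hv, rfl⟩, hQ⟩
      obtain ⟨c, hc, x, rfl⟩ := exists_eq_smul_projCoords hv
      have hscale : (fun i => algebraMap F K ((c • projCoords x) i)) =
          algebraMap F K c • fun i => algebraMap F K (projCoords x i) := by
        ext i; simp
      have hspan :
          Submodule.span K {g (fun i => algebraMap F K ((c • projCoords x) i))} = φ x := by
        rw [hscale, map_smul, Submodule.span_singleton_smul_eq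
          (isUnit_iff_ne_zero.mpr ((_root_.map_ne_zero _).mpr hc))]
      exact ⟨x, show Q (φ x) from hspan ▸ hQ, hspan.symm⟩
    · rintro ⟨x, hx, rfl⟩
      exact ⟨⟨projCoords x, projCoords_ne_zero x, rfl⟩, hx⟩
  exact (congrArg (fun s : Set _ => Nat.card s) hrange).trans (Nat.card_image_of_injective hφ _)

variable [Module F V] [IsScalarTower F K V]

lemma restrictScalars_span_singleton_inf_ne_bot_iff {w : V} (hw : w ≠ 0) (U : Submodule F V) :
    (Submodule.span K {w}).restrictScalars F ⊓ U ≠ ⊥ ↔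
      LinearMap.ker (U.mkQ ∘ₗ (LinearMap.toSpanSingleton K V w).restrictScalars F) ≠ ⊥ := by
  set f := (LinearMap.toSpanSingleton K V w).restrictScalars F
  have hf : Function.Injective f := smul_left_injective K hw
  rw [LinearMap.ker_comp, Submodule.ker_mkQ, LinearMap.span_singleton_eq_range,
    ← LinearMap.range_restrictScalars, ← Submodule.map_comap_eq, ne_eq, ne_eq,
    ← Submodule.map_bot f, (Submodule.map_injective_of_injective hf).eq_iff]

end Subline

lemma finrank_eq_of_card_eq_pow {F V : Type*} [Field F] [Fintype F] [AddCommGroup V]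
    [Module F V] [Fintype V] {n : ℕ} (h : Fintype.card V = Fintype.card F ^ n) :
    Module.finrank F V = n :=
  Nat.pow_right_injective Fintype.one_lt_card (Module.card_eq_pow_finrank.symm.trans h)

/-- A subline PG(1, q) of PG(1, q^3) (a PGL(2, q^3)-image of the canonical subline over
the subfield F of order q) meets any F_q-linear set of PG(1, q^3) in 0, 1, 2, 3 or
q + 1 points. -/
theorem stmt_11 (q : ℕ) (F K : Type*) [Field F] [Fintype F] [Field K] [Fintype K]
    [Algebra F K] (hF : Fintype.card F = q) (hK : Fintype.card K = q ^ 3)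
    (g : (Fin 2 → K) ≃ₗ[K] (Fin 2 → K)) (U : Submodule F (Fin 2 → K)) :
    Nat.card {P : Submodule K (Fin 2 → K) //
        (∃ v : Fin 2 → F, v ≠ 0 ∧
          P = Submodule.span K {g (fun i => algebraMap F K (v i))}) ∧
        P.restrictScalars F ⊓ U ≠ ⊥}
      ∈ ({0, 1, 2, 3, q + 1} : Set ℕ) := by
  have hdim : Module.finrank F K = 3 := finrank_eq_of_card_eq_pow (hF ▸ hK)
  have : FiniteDimensional F K := Module.Finite.of_finite
  -- `Φ v λ = [λ • g v]`
  let Φ : (Fin 2 → F) →ₗ[F] K →ₗ[F] (Fin 2 → K) ⧸ U :=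
    LinearMap.compRight F U.mkQ ∘ₗ (Algebra.lsmul F F (Fin 2 → K)).toLinearMap.flip ∘ₗ
      (g.restrictScalars F).toLinearMap ∘ₗ (Algebra.linearMap F K).compLeft (Fin 2)
  have hmeet (x : Option F) :
      (Submodule.span K {g (fun i => algebraMap F K (projCoords x i))}).restrictScalars F ⊓ U ≠ ⊥
        ↔ LinearMap.ker (Φ (projCoords x)) ≠ ⊥ :=
    restrictScalars_span_singleton_inf_ne_bot_iff
      (g.map_ne_zero_iff.mpr (by simpa [funext_iff] using projCoords_ne_zero x)) U
  rw [← LinearEquiv.coe_coe g, card_subline_eq _ g.injective, LinearEquiv.coe_coe,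
    Nat.card_congr (Equiv.subtypeEquivRight hmeet)]
  rcases ker_ne_bot_forall_or_card_le Φ with hall | hle
  · rw [Nat.card_congr (Equiv.subtypeUnivEquiv hall), Finite.card_option,
      Nat.card_eq_fintype_card, hF]
    simp
  · rw [hdim] at hle
    interval_cases Nat.card {x // LinearMap.ker (Φ (projCoords x)) ≠ ⊥} <;> simp
end

section
/- Let q be a square. A subline PG(1, q) and a Baer subline PG(1, q√q) of PG(1, q^3) share at most a subline PG(1, √q), i.e., their intersection has at most √q + 1 points. -/
/-!
Let `σ` be the Frobenius `x ↦ x ^ r ^ 3` of `K`: it fixes `E` pointwise and acts as `x ↦ x ^ r`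
on `F`. Write `M` for the matrix of `g₂⁻¹ ∘ g₁`. A common point is spanned by `g₁ x` with `x`
`F`-rational and `M x` proportional to an `E`-rational vector, so `M x` and `σ (M x)` are
linearly dependent. As `σ` raises the coordinates of `x` to the `r`-th power, this says that
`x` is a zero of a binary form of degree `r + 1`, which is nonzero because `M` is invertible;
hence it has at most `r + 1` zeros on the projective line.
-/

open Polynomial Matrix

theorem FiniteField.exists_ringHom_forall_eq_pow {K : Type*} [Field K] [Fintype K] {r k : ℕ}
    (hk : k ≠ 0) (hK : Fintype.card K = r ^ k) : ∃ σ : K →+* K, ∀ x, σ x = x ^ r := by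
  obtain ⟨n, hp, hcard⟩ := FiniteField.card K (ringChar K)
  have hr : r ∣ ringChar K ^ (n : ℕ) := hcard ▸ hK ▸ dvd_pow_self r hk
  obtain ⟨m, -, rfl⟩ := (Nat.dvd_prime_pow hp).mp hr
  have : ExpChar K (ringChar K) := ExpChar.prime hp
  exact ⟨iterateFrobenius K (ringChar K) m, iterateFrobenius_def _ _⟩

lemma exists_smul_eq_vec_one_zero_or_vec_one {K : Type*} [Field K] {x : Fin 2 → K}
    (hx : x ≠ 0) : ∃ c : K, c ≠ 0 ∧ (x = c • ![1, 0] ∨ ∃ t, x = c • ![t, 1]) := by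
  by_cases h1 : x 1 = 0
  · have h0 : x 0 ≠ 0 := fun h0 => hx (funext fun i => by fin_cases i <;> assumption)
    exact ⟨x 0, h0, Or.inl (funext fun i => by fin_cases i <;> simp [h1])⟩
  · refine ⟨x 1, h1, Or.inr ⟨x 0 / x 1, funext fun i => ?_⟩⟩
    fin_cases i <;> simp [mul_div_cancel₀, h1]

section TwistedForm

variable {K : Type*} [Field K] (σ : K →+* K) (r : ℕ) (M : Matrix (Fin 2) (Fin 2) K)

/-- When `σ (x i) = x i ^ r`, the vector `M.map σ *ᵥ x ^ r` is `σ (M *ᵥ x)`, so this binary form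
of degree `r + 1` vanishes iff `M *ᵥ x` and its conjugate are linearly dependent. -/
def twistedForm (x : Fin 2 → K) : K :=
  (M *ᵥ x) 0 * (M.map σ *ᵥ fun i => x i ^ r) 1 - (M.map σ *ᵥ fun i => x i ^ r) 0 * (M *ᵥ x) 1

lemma twistedForm_smul (c : K) (x : Fin 2 → K) :
    twistedForm σ r M (c • x) = c ^ (r + 1) * twistedForm σ r M x := by
  simp only [twistedForm, mulVec_fin_two, Pi.smul_apply, smul_eq_mul, mul_pow,
    Matrix.cons_val_zero, Matrix.cons_val_one]
  ring

lemma twistedForm_eq_zero_of_mulVec_eq_smul {x w : Fin 2 → K} {c : K}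
    (hx : ∀ i, σ (x i) = x i ^ r) (hw : ∀ i, σ (w i) = w i) (h : M *ᵥ x = c • w) :
    twistedForm σ r M x = 0 := by
  have hσ : ∀ i, σ ((M *ᵥ x) i) = (M.map σ *ᵥ fun i => x i ^ r) i := fun i => by
    rw [RingHom.map_mulVec]
    exact congrArg (fun y => (M.map σ *ᵥ y) i) (funext hx)
  simp only [twistedForm, ← hσ, h, Pi.smul_apply, smul_eq_mul, map_mul, hw]
  ring

noncomputable def twistedPoly : K[X] :=
  (C (M 0 0) * X + C (M 0 1)) * (C (σ (M 1 0)) * X ^ r + C (σ (M 1 1))) -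
    (C (σ (M 0 0)) * X ^ r + C (σ (M 0 1))) * (C (M 1 0) * X + C (M 1 1))

lemma eval_twistedPoly (t : K) : (twistedPoly σ r M).eval t = twistedForm σ r M ![t, 1] := by
  simp [twistedPoly, twistedForm, mulVec_fin_two]

lemma twistedPoly_eq :
    twistedPoly σ r M =
      C (M 0 0 * σ (M 1 0) - σ (M 0 0) * M 1 0) * X ^ (r + 1) +
      C (M 0 1 * σ (M 1 0) - σ (M 0 0) * M 1 1) * X ^ r +
      C (M 0 0 * σ (M 1 1) - σ (M 0 1) * M 1 0) * X +
      C (M 0 1 * σ (M 1 1) - σ (M 0 1) * M 1 1) := by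
  simp only [twistedPoly, map_sub, map_mul]
  ring

lemma natDegree_twistedPoly_le : (twistedPoly σ r M).natDegree ≤ r + 1 := by
  rw [twistedPoly_eq]
  compute_degree

lemma coeff_twistedPoly_succ (hr : r ≠ 0) :
    (twistedPoly σ r M).coeff (r + 1) = twistedForm σ r M ![1, 0] := by
  rw [twistedPoly_eq]
  simp only [coeff_add, coeff_C_mul, coeff_X_pow, coeff_X, coeff_C]
  simp [hr, twistedForm, mulVec_fin_two]

lemma coeff_twistedPoly_self (hr : 2 ≤ r) :
    (twistedPoly σ r M).coeff r = M 0 1 * σ (M 1 0) - σ (M 0 0) * M 1 1 := by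
  rw [twistedPoly_eq]
  simp only [coeff_add, coeff_C_mul, coeff_X_pow, coeff_X, coeff_C]
  simp [show r ≠ 0 by omega, show 1 ≠ r by omega]

lemma twistedPoly_ne_zero (hr : 2 ≤ r) (hM : M.det ≠ 0) : twistedPoly σ r M ≠ 0 := by
  intro h0
  have hlead : M 0 0 * σ (M 1 0) - σ (M 0 0) * M 1 0 = 0 := by
    have h := coeff_twistedPoly_succ σ r M (by omega)
    rw [h0, coeff_zero] at h
    simpa [twistedForm, mulVec_fin_two, show r ≠ 0 by omega] using h.symm
  have hnext : M 0 1 * σ (M 1 0) - σ (M 0 0) * M 1 1 = 0 := by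
    rw [← coeff_twistedPoly_self σ r M hr, h0, coeff_zero]
  apply hM
  rw [det_fin_two]
  by_cases h10 : M 1 0 = 0
  · have : σ (M 0 0) * M 1 1 = 0 := by simpa [h10] using hnext
    rcases mul_eq_zero.mp this with h | h
    · simp [(map_eq_zero σ).mp h, h10]
    · simp [h, h10]
  · have : σ (M 1 0) * (M 0 0 * M 1 1 - M 0 1 * M 1 0) = 0 := by
      linear_combination M 1 1 * hlead - M 1 0 * hnext
    exact (mul_eq_zero.mp this).resolve_left ((map_ne_zero σ).mpr h10)

lemma isRoot_twistedPoly_or_coeff_eq_zero (hr : r ≠ 0) {x : Fin 2 → K} (hx : x ≠ 0)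
    (h : twistedForm σ r M x = 0) :
    (∃ t, (twistedPoly σ r M).IsRoot t ∧ ∃ c : K, c ≠ 0 ∧ x = c • ![t, 1]) ∨
      ((twistedPoly σ r M).coeff (r + 1) = 0 ∧ ∃ c : K, c ≠ 0 ∧ x = c • ![1, 0]) := by
  obtain ⟨c, hc, hxc | ⟨t, hxc⟩⟩ := exists_smul_eq_vec_one_zero_or_vec_one hx
  all_goals rw [hxc, twistedForm_smul, mul_eq_zero, or_iff_right (pow_ne_zero _ hc)] at h
  · exact Or.inr ⟨by rwa [coeff_twistedPoly_succ σ r M hr], c, hc, hxc⟩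
  · exact Or.inl ⟨t, by rwa [IsRoot, eval_twistedPoly], c, hc, hxc⟩

end TwistedForm

/-- `φ` and `a` play the affine chart and the point at infinity of a projective line, and `p` the
dehomogenization of a form of degree `n`, which vanishes at infinity iff `p.coeff n = 0`. -/
lemma ncard_le_of_forall_isRoot_or_coeff_eq_zero {K α : Type*} [Field K] {p : K[X]}
    (hp : p ≠ 0) {n : ℕ} (hn : p.natDegree ≤ n) (φ : K → α) (a : α) {S : Set α}
    (hS : ∀ x ∈ S, (∃ t, p.IsRoot t ∧ φ t = x) ∨ (p.coeff n = 0 ∧ x = a)) :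
    S.ncard ≤ n := by
  classical
  have hroots : (p.roots.toFinset.image φ).card ≤ p.natDegree :=
    Finset.card_image_le.trans ((Multiset.toFinset_card_le _).trans (card_roots' p))
  have hmem : ∀ t, p.IsRoot t → φ t ∈ p.roots.toFinset.image φ := fun t ht =>
    Finset.mem_image_of_mem φ (by simpa [mem_roots hp] using ht)
  by_cases hc : p.coeff n = 0
  · have hlt : p.natDegree < n :=
      hn.lt_of_ne fun h => hp (leadingCoeff_eq_zero.mp (by rwa [leadingCoeff, h]))
    have hsub : S ⊆ ↑(insert a (p.roots.toFinset.image φ)) := by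
      intro x hx
      rcases hS x hx with ⟨t, ht, rfl⟩ | ⟨-, rfl⟩
      · exact Finset.mem_insert_of_mem (hmem t ht)
      · exact Finset.mem_insert_self _ _
    calc S.ncard ≤ (insert a (p.roots.toFinset.image φ)).card :=
          (Set.ncard_le_ncard hsub (Finset.finite_toSet _)).trans (Set.ncard_coe_finset _).le
      _ ≤ p.natDegree + 1 := (Finset.card_insert_le _ _).trans (by omega)
      _ ≤ n := hlt
  · have hsub : S ⊆ ↑(p.roots.toFinset.image φ) := by
      intro x hx
      rcases hS x hx with ⟨t, ht, rfl⟩ | ⟨hc', -⟩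
      · exact hmem t ht
      · exact absurd hc' hc
    calc S.ncard ≤ (p.roots.toFinset.image φ).card :=
          (Set.ncard_le_ncard hsub (Finset.finite_toSet _)).trans (Set.ncard_coe_finset _).le
      _ ≤ n := hroots.trans hn

/-- Let q = r^2 be a square. A subline PG(1, q) and a Baer subline PG(1, q√q) = PG(1, r^3)
of PG(1, q^3) = PG(1, r^6) share at most √q + 1 = r + 1 points. -/
theorem stmt_12 (r : ℕ) (F E K : Type*) [Field F] [Fintype F] [Field E] [Fintype E]
    [Field K] [Fintype K] [Algebra F K] [Algebra E K]
    (hF : Fintype.card F = r ^ 2) (hE : Fintype.card E = r ^ 3)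
    (hK : Fintype.card K = r ^ 6)
    (g₁ g₂ : (Fin 2 → K) ≃ₗ[K] (Fin 2 → K)) :
    Nat.card {P : Submodule K (Fin 2 → K) //
        (∃ v : Fin 2 → F, v ≠ 0 ∧
          P = Submodule.span K {g₁ (fun i => algebraMap F K (v i))}) ∧
        (∃ w : Fin 2 → E, w ≠ 0 ∧
          P = Submodule.span K {g₂ (fun i => algebraMap E K (w i))})}
      ≤ r + 1 := by
  have hr : 2 ≤ r := (Nat.one_lt_pow_iff two_ne_zero).mp (hF ▸ Fintype.one_lt_card)
  obtain ⟨σ, hσ⟩ := FiniteField.exists_ringHom_forall_eq_pow (r := r ^ 3) two_ne_zero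
    (by rw [hK]; ring)
  have hσF (a : F) : σ (algebraMap F K a) = algebraMap F K a ^ r := by
    rw [hσ, ← map_pow, show r ^ 3 = r ^ 2 * r by ring, pow_mul, ← hF, FiniteField.pow_card,
      map_pow]
  have hσE (b : E) : σ (algebraMap E K b) = algebraMap E K b := by
    rw [hσ, ← map_pow, ← hE, FiniteField.pow_card]
  set M := LinearMap.toMatrix' (g₁.trans g₂.symm : (Fin 2 → K) →ₗ[K] (Fin 2 → K))
  have hM : M.det ≠ 0 := by
    rw [LinearMap.det_toMatrix']
    exact (LinearEquiv.isUnit_det' _).ne_zero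
  rw [← Set.coe_ofPred, Nat.card_coe_set_eq]
  refine ncard_le_of_forall_isRoot_or_coeff_eq_zero (twistedPoly_ne_zero σ r M hr hM)
    (natDegree_twistedPoly_le σ r M) (fun t => K ∙ g₁ ![t, 1]) (K ∙ g₁ ![1, 0]) ?_
  rintro P ⟨⟨v, hv, rfl⟩, w, -, hPw⟩
  have hx : (fun i => algebraMap F K (v i)) ≠ 0 := fun h =>
    hv (funext fun i => (algebraMap F K).injective (by simpa using congrFun h i))
  have hdep : twistedForm σ r M (fun i => algebraMap F K (v i)) = 0 := by
    obtain ⟨c, hc⟩ := Submodule.mem_span_singleton.mp (hPw ▸ Submodule.mem_span_singleton_self _)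
    refine twistedForm_eq_zero_of_mulVec_eq_smul σ r M (c := c) (fun i => hσF (v i))
      (fun i => hσE (w i)) ?_
    rw [LinearMap.toMatrix'_mulVec]
    simp [← hc]
  rcases isRoot_twistedPoly_or_coeff_eq_zero σ r M (by omega) hx hdep with
    ⟨t, ht, c, hc, hxc⟩ | ⟨hcoeff, c, hc, hxc⟩
  all_goals rw [hxc, map_smul, Submodule.span_singleton_smul_eq (IsUnit.mk0 c hc)]
  exacts [Or.inl ⟨t, ht, rfl⟩, Or.inr ⟨hcoeff, rfl⟩]
end

section
/- Let B be a k-blocking set of PG(n, Q), Q = p^h, with |B| ≤ 2Q^k. If every (n-k)-dimensional subspace intersects B in 1 mod p points, then B is minimal (no proper subset of B is a k-blocking set). -/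
/-!
Suppose a proper subset `B'` of `B` still meets every `(n-k)`-space, and pick `P₀ ∈ B \ B'`.
Every `(n-k)`-space through `P₀` then contains `P₀` and a point of `B'`, hence at least two and
so, being `1 mod p`, at least `p + 1` points of `B`. The `(n-k)`-spaces through `P₀` are the
`(n-k-1)`-spaces of the quotient by `P₀`; since the linear group acts transitively on nonzero
vectors, double counting shows that a fixed point `P ≠ P₀` lies on at most a `1 / Q^k` fraction
of them. Double counting incidences between `B \ {P₀}` and these spaces gives
`|B| - 1 ≥ p Q^k ≥ 2 Q^k`, contradicting `|B| ≤ 2 Q^k`.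
-/

open Module Submodule Finset

instance Submodule.finite_of_finite {R M : Type*} [Semiring R] [AddCommMonoid M] [Module R M]
    [Finite M] : Finite (Submodule R M) :=
  Finite.of_injective _ SetLike.coe_injective

section

variable {K V : Type*} [Field K] [AddCommGroup V] [Module K V]

theorem exists_linearEquiv_apply_eq {x y : V} (hx : x ≠ 0) (hy : y ≠ 0) :
    ∃ g : V ≃ₗ[K] V, g x = y := by
  obtain ⟨g, hg⟩ := exists_linearEquiv_restrict_eq
    ((LinearEquiv.toSpanNonzeroSingleton K V x hx).symm ≪≫ₗ
      LinearEquiv.toSpanNonzeroSingleton K V y hy)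
  refine ⟨g, ?_⟩
  have hx1 :
      (LinearEquiv.toSpanNonzeroSingleton K V x hx).symm ⟨x, mem_span_singleton_self x⟩ = 1 := by
    rw [LinearEquiv.symm_apply_eq]; ext; simp
  simpa [hx1] using (hg ⟨x, mem_span_singleton_self x⟩).symm

theorem card_finrank_eq_and_mem_eq (j : ℕ) {x y : V} (hx : x ≠ 0) (hy : y ≠ 0) :
    Nat.card {W : Submodule K V // finrank K W = j ∧ x ∈ W} =
      Nat.card {W : Submodule K V // finrank K W = j ∧ y ∈ W} := by
  obtain ⟨g, rfl⟩ := exists_linearEquiv_apply_eq (K := K) hx hy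
  refine Nat.card_congr <| (orderIsoMapComap g).toEquiv.subtypeEquiv fun W => ?_
  change _ ↔ finrank K (W.map (g : V →ₗ[K] V)) = j ∧ g x ∈ W.map (g : V →ₗ[K] V)
  rw [LinearEquiv.finrank_map_eq, Submodule.mem_map_equiv, LinearEquiv.symm_apply_apply]

theorem finrank_comap_mkQ [FiniteDimensional K V] (P : Submodule K V) (W : Submodule K (V ⧸ P)) :
    finrank K (W.comap P.mkQ) = finrank K W + finrank K P := by
  have e := quotientQuotientEquivQuotient P (W.comap P.mkQ) (le_comap_mkQ P W)
  rw [map_comap_eq_self (by simp)] at e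
  have h₁ := (W.comap P.mkQ).finrank_quotient_add_finrank
  have h₂ := W.finrank_quotient_add_finrank
  have h₃ := P.finrank_quotient_add_finrank
  have h₄ := e.finrank_eq
  omega

theorem exists_finrank_eq [FiniteDimensional K V] {d : ℕ} (hd : d ≤ finrank K V) :
    ∃ W : Submodule K V, finrank K W = d := by
  let b := Module.finBasis K V
  refine ⟨span K (Set.range (b ∘ Fin.castLE hd)), ?_⟩
  rw [finrank_span_eq_card (b.linearIndependent.comp _ (Fin.castLE_injective hd))]
  simp

end

section

variable {K V : Type*} [Field K] [Fintype K] [AddCommGroup V] [Module K V] [FiniteDimensional K V]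

theorem card_finrank_eq_mul_pow_sub_one_eq (j : ℕ) {y : V} (hy : y ≠ 0) :
    Nat.card {W : Submodule K V // finrank K W = j} * (Fintype.card K ^ j - 1) =
      (Fintype.card K ^ finrank K V - 1) *
        Nat.card {W : Submodule K V // finrank K W = j ∧ y ∈ W} := by
  classical
  have := Module.finite_of_finite K (M := V)
  have := Fintype.ofFinite V
  have := Fintype.ofFinite (Submodule K V)
  let r : Submodule K V → V → Prop := fun W x => x ∈ W
  have habove : ∀ W ∈ ({W | finrank K W = j} : Finset (Submodule K V)),
      #((univ.erase 0).bipartiteAbove r W) = Fintype.card K ^ j - 1 := by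
    intro W hW
    rw [mem_filter] at hW
    rw [bipartiteAbove, filter_erase, card_erase_of_mem (by simp [r]), ← Fintype.card_subtype,
      card_eq_pow_finrank (K := K) (V := W), hW.2]
  have hbelow : ∀ x ∈ univ.erase (0 : V),
      #(({W | finrank K W = j} : Finset (Submodule K V)).bipartiteBelow r x) =
      Nat.card {W : Submodule K V // finrank K W = j ∧ y ∈ W} := by
    intro x hx
    rw [bipartiteBelow, filter_filter, ← Fintype.card_subtype, ← Nat.card_eq_fintype_card]
    exact card_finrank_eq_and_mem_eq j (ne_of_mem_erase hx) hy
  have key := card_mul_eq_card_mul r habove hbelow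
  rwa [card_erase_of_mem (mem_univ _), card_univ, card_eq_pow_finrank (K := K) (V := V),
    ← Fintype.card_subtype, ← Nat.card_eq_fintype_card] at key

theorem pow_mul_card_finrank_eq_and_mem_le {j : ℕ} (hj : 0 < j) {y : V} (hy : y ≠ 0) :
    Fintype.card K ^ (finrank K V - j) * Nat.card {W : Submodule K V // finrank K W = j ∧ y ∈ W} ≤
      Nat.card {W : Submodule K V // finrank K W = j} := by
  rcases lt_or_ge (finrank K V) j with hjN | hjN
  · have : IsEmpty {W : Submodule K V // finrank K W = j ∧ y ∈ W} :=
      ⟨fun W => (W.1.finrank_le.trans_lt hjN).ne W.2.1⟩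
    simp
  set q := Fintype.card K
  have hq : 1 < q := Fintype.one_lt_card
  have hqj : 0 < q ^ j - 1 := Nat.sub_pos_of_lt (Nat.one_lt_pow hj.ne' hq)
  have hpow : q ^ (finrank K V - j) * (q ^ j - 1) ≤ q ^ finrank K V - 1 := by
    rw [Nat.mul_sub_one, ← pow_add, Nat.sub_add_cancel hjN]
    exact Nat.sub_le_sub_left (Nat.one_le_pow _ _ (by omega)) _
  refine Nat.le_of_mul_le_mul_right ?_ hqj
  rw [card_finrank_eq_mul_pow_sub_one_eq j hy]
  calc _ = q ^ (finrank K V - j) * (q ^ j - 1) * Nat.card _ := by ring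
    _ ≤ _ := Nat.mul_le_mul_right _ hpow

open Classical in
theorem mul_pow_le_card_erase_of_lt_card_filter_le {B : Finset (Submodule K V)}
    (hB : ∀ P ∈ B, finrank K P = 1) {P₀ : Submodule K V} (hP₀ : finrank K P₀ = 1)
    {m r : ℕ} (hm : 0 < m) (hmV : m < finrank K V)
    (hr : ∀ W : Submodule K V, finrank K W = m + 1 → P₀ ≤ W → r < #{P ∈ B | P ≤ W}) :
    r * Fintype.card K ^ (finrank K V - (m + 1)) ≤ #(B.erase P₀) := by
  have := Module.finite_of_finite K (M := V ⧸ P₀)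
  have := Fintype.ofFinite (Submodule K (V ⧸ P₀))
  set q := Fintype.card K
  set e := finrank K V - (m + 1)
  let S : Finset (Submodule K (V ⧸ P₀)) := {W | finrank K W = m}
  let rel : Submodule K (V ⧸ P₀) → Submodule K V → Prop := fun W P => P ≤ W.comap P₀.mkQ
  have hquot : finrank K (V ⧸ P₀) = finrank K V - 1 := by
    have := P₀.finrank_quotient_add_finrank; omega
  have hS : 0 < #S := by
    obtain ⟨W, hW⟩ := exists_finrank_eq (K := K) (V := V ⧸ P₀) (d := m) (by omega)
    exact card_pos.2 ⟨W, by simp [S, hW]⟩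
  have habove : ∀ W ∈ S, r ≤ #((B.erase P₀).bipartiteAbove rel W) := by
    intro W hW
    have hW : finrank K W = m := (mem_filter.1 hW).2
    have := hr (W.comap P₀.mkQ) (by rw [finrank_comap_mkQ, hW, hP₀]) (le_comap_mkQ P₀ W)
    rw [bipartiteAbove, filter_erase]
    exact (Nat.le_sub_one_of_lt this).trans pred_card_le_card_erase
  have hbelow : ∀ P ∈ B.erase P₀, q ^ e * #(S.bipartiteBelow rel P) ≤ #S := by
    intro P hP
    obtain ⟨hPP₀, hPB⟩ := mem_erase.1 hP
    have hP := hB P hPB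
    obtain ⟨x, hxP, hx⟩ := exists_mem_ne_zero_of_ne_bot (p := P) (by rintro rfl; simp at hP)
    have hPx := eq_span_singleton_of_mem_of_finrank_eq_one hP hxP hx
    have hxP₀ : P₀.mkQ x ≠ 0 := by
      rw [mkQ_apply, Ne, Quotient.mk_eq_zero]
      intro hxP₀
      exact hPP₀ (eq_of_le_of_finrank_eq (hPx ▸ (span_singleton_le_iff_mem _ _).2 hxP₀)
        (by rw [hP, hP₀]))
    have hcount : #(S.bipartiteBelow rel P) =
        Nat.card {W : Submodule K (V ⧸ P₀) // finrank K W = m ∧ P₀.mkQ x ∈ W} := by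
      rw [Nat.card_eq_fintype_card, Fintype.card_subtype, bipartiteBelow, filter_filter]
      refine congrArg card (filter_congr fun W _ => ?_)
      simp [rel, hPx, span_singleton_le_iff_mem]
    have hS : #S = Nat.card {W : Submodule K (V ⧸ P₀) // finrank K W = m} := by
      rw [Nat.card_eq_fintype_card, Fintype.card_subtype]
    rw [hcount, hS]
    have key := pow_mul_card_finrank_eq_and_mem_le (K := K) hm hxP₀
    rwa [hquot, show finrank K V - 1 - m = e by omega] at key
  have hsum := sum_card_bipartiteAbove_eq_sum_card_bipartiteBelow rel (s := S) (t := B.erase P₀)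
  have h₁ : #S * r ≤ ∑ W ∈ S, #((B.erase P₀).bipartiteAbove rel W) := by
    simpa using card_nsmul_le_sum S _ r habove
  have h₂ : q ^ e * ∑ P ∈ B.erase P₀, #(S.bipartiteBelow rel P) ≤ #(B.erase P₀) * #S := by
    rw [mul_sum]; simpa using sum_le_card_nsmul _ _ _ hbelow
  refine Nat.le_of_mul_le_mul_right ?_ hS
  calc r * q ^ e * #S = q ^ e * (#S * r) := by ring
    _ ≤ q ^ e * ∑ P ∈ B.erase P₀, #(S.bipartiteBelow rel P) := by rw [← hsum]; gcongr
    _ ≤ _ := h₂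

end

theorem Nat.lt_of_modEq_one {c p : ℕ} (h : c ≡ 1 [MOD p]) (hc : 1 < c) : p < c := by
  have := Nat.le_of_dvd (by omega) ((Nat.modEq_iff_dvd' hc.le).1 h.symm)
  omega

theorem stmt_14_general (p Q : ℕ) (hp : p.Prime)
    (K : Type*) [Field K] [Fintype K] (hK : Fintype.card K = Q)
    (n k : ℕ)
    (B : Set (Submodule K (Fin (n + 1) → K)))
    (hB : ∀ P ∈ B, Module.finrank K P = 1)
    (hsize : Nat.card ↥B ≤ 2 * Q ^ k)
    (hmod : ∀ W : Submodule K (Fin (n + 1) → K), Module.finrank K W = n - k + 1 →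
      Nat.card {P : Submodule K (Fin (n + 1) → K) // P ∈ B ∧ P ≤ W} ≡ 1 [MOD p]) :
    ∀ B' ⊂ B, ∃ W : Submodule K (Fin (n + 1) → K),
      Module.finrank K W = n - k + 1 ∧ ∀ P ∈ B', ¬ P ≤ W := by
  classical
  intro B' hB'B
  obtain ⟨P₀, hP₀B, hP₀B'⟩ := Set.exists_of_ssubset hB'B
  rcases le_or_gt n k with hnk | hkn
  -- here `n - k + 1 = 1` in `ℕ`, so `P₀` itself is a tangent space
  · refine ⟨P₀, by rw [hB P₀ hP₀B]; omega, fun P hP hPP₀ => hP₀B' ?_⟩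
    rwa [← eq_of_le_of_finrank_eq hPP₀ (by rw [hB P₀ hP₀B, hB P (hB'B.subset hP)])]
  by_contra! hmeet
  have := Fintype.ofFinite (Submodule K (Fin (n + 1) → K))
  have hlower : ∀ W : Submodule K (Fin (n + 1) → K), finrank K W = n - k + 1 → P₀ ≤ W →
      p < #{P ∈ B.toFinset | P ≤ W} := by
    intro W hW hP₀W
    obtain ⟨P₁, hP₁B', hP₁W⟩ := hmeet W hW
    have hcard : Nat.card {P // P ∈ B ∧ P ≤ W} = #{P ∈ B.toFinset | P ≤ W} := by
      rw [Nat.card_eq_fintype_card, Fintype.card_subtype]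
      congr 1; ext P; simp
    refine Nat.lt_of_modEq_one (hcard ▸ hmod W hW) (one_lt_card.2 ⟨P₀, ?_, P₁, ?_, ?_⟩)
    · simpa using ⟨hP₀B, hP₀W⟩
    · simpa using ⟨hB'B.subset hP₁B', hP₁W⟩
    · exact fun h => hP₀B' (h ▸ hP₁B')
  have key := mul_pow_le_card_erase_of_lt_card_filter_le (B := B.toFinset) (by simpa using hB)
    (hB P₀ hP₀B) (m := n - k) (by omega) (by rw [finrank_fin_fun]; omega) hlower
  rw [finrank_fin_fun, show n + 1 - (n - k + 1) = k by omega, hK] at key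
  have hlt := card_erase_lt_of_mem (Set.mem_toFinset.2 hP₀B)
  rw [Set.toFinset_card, ← Nat.card_eq_fintype_card] at hlt
  nlinarith [hp.two_le]

/-- A k-blocking set B of PG(n, Q), Q = p^h, with |B| ≤ 2Q^k meeting every (n-k)-space
in 1 mod p points is minimal: no proper subset is a k-blocking set. -/
theorem stmt_14 (p h Q : ℕ) (hp : p.Prime) (hQ : Q = p ^ h)
    (K : Type*) [Field K] [Fintype K] (hK : Fintype.card K = Q)
    (n k : ℕ) (hk : 1 ≤ k) (hkn : k ≤ n)
    (B : Set (Submodule K (Fin (n + 1) → K)))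
    (hB : ∀ P ∈ B, Module.finrank K P = 1)
    (hblock : ∀ W : Submodule K (Fin (n + 1) → K), Module.finrank K W = n - k + 1 →
      ∃ P ∈ B, P ≤ W)
    (hsize : Nat.card ↥B ≤ 2 * Q ^ k)
    (hmod : ∀ W : Submodule K (Fin (n + 1) → K), Module.finrank K W = n - k + 1 →
      Nat.card {P : Submodule K (Fin (n + 1) → K) // P ∈ B ∧ P ≤ W} ≡ 1 [MOD p]) :
    ∀ B' ⊂ B, ∃ W : Submodule K (Fin (n + 1) → K),
      Module.finrank K W = n - k + 1 ∧ ∀ P ∈ B', ¬ P ≤ W :=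
  stmt_14_general p Q hp K hK n k B hB hsize hmod
end
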